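/- Let μ be a Young diagram with n cells, let d be the length of its first row, and let μ' be the diagram obtained from μ by deleting its first row. Then dim π_μ = dim π_{μ'} · C(n,d) · ∏_{i=1}^{d} (1 + (c_i - 1)/i)^{-1}, where c_i is the length of the (d-i+1)-th column of μ. -/

import Mathlib

/-- The hook length of the cell `c = (i, j)` (0-indexed) of a Young diagram `μ`. -/
def YoungDiagram.hookLength (μ : YoungDiagram) (c : ℕ × ℕ) : ℕ :=
  (μ.rowLen c.1 - c.2) + (μ.colLen c.2 - c.1) - 1

/-- Hook length formula dimension of the irreducible representation `π_μ` of `S_{|μ|}`. -/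
def YoungDiagram.dimIrrep (μ : YoungDiagram) : ℕ :=
  (Nat.factorial μ.card) / ∏ c ∈ μ.cells, μ.hookLength c

/-!
Deleting the first row of `μ` removes exactly the hooks of the first-row cells, and the cell
`(0, d - i)` has hook length `i + c_i - 1 = i (1 + (c_i - 1) / i)`. So the identity reduces to
`n! = C(n, d) d! (n - d)!`, provided `dimIrrep` is an honest quotient, i.e. the hook product
divides `|μ|!`.

For that divisibility, let `β_i` be the hook length of `(i, 0)`. In row `i`, the hook lengths
together with the differences `β_i - β_m` (`m > i`) are exactly `1, …, β_i`, so
`∏ β_i! = H(μ) · ∏_{i < m} (β_i - β_m)`. The Vandermonde determinant of the `β_i` equals the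
determinant of the falling factorials `β_i (β_i - 1) ⋯ (β_i - j + 1)`, and `n!` times each term of
its Leibniz expansion is divisible by `∏ β_i!`, because `n! / ∏ (β_{σ i} - i)!` is a multinomial
coefficient.
-/

open Finset Nat

theorem Matrix.det_of_descFactorial {k : ℕ} (L : Fin k → ℕ) :
    (Matrix.of fun i j : Fin k => ((L i).descFactorial j : ℤ)).det =
      ∏ i : Fin k, ∏ j ∈ Ioi i, ((L j : ℤ) - L i) := by
  rw [← det_vandermonde, det_eval_matrixOfPolynomials_eq_det_vandermonde (fun i => (L i : ℤ))
    (fun j => descPochhammer ℤ j) (fun j => descPochhammer_natDegree ℤ j)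
    (fun j => monic_descPochhammer ℤ j)]
  simp only [descPochhammer_eval_eq_descFactorial]

theorem Nat.prod_factorial_dvd_factorial_mul_prod_descFactorial {ι : Type*} (s : Finset ι)
    (L e : ι → ℕ) {n : ℕ} (hsum : ∑ i ∈ s, L i = n + ∑ i ∈ s, e i) :
    ∏ i ∈ s, (L i)! ∣ n ! * ∏ i ∈ s, (L i).descFactorial (e i) := by
  by_cases hle : ∀ i ∈ s, e i ≤ L i
  · have hn : ∑ i ∈ s, (L i - e i) = n := by
      rw [sum_tsub_distrib _ hle, hsum, Nat.add_sub_cancel]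
    have hfac : ∏ i ∈ s, (L i)! =
        (∏ i ∈ s, (L i - e i)!) * ∏ i ∈ s, (L i).descFactorial (e i) := by
      rw [← prod_mul_distrib]
      exact prod_congr rfl fun i hi => (factorial_mul_descFactorial (hle i hi)).symm
    rw [hfac]
    exact mul_dvd_mul_right (hn ▸ prod_factorial_dvd_factorial_sum s _) _
  · push Not at hle
    obtain ⟨i, hi, hlt⟩ := hle
    rw [prod_eq_zero (f := fun i => (L i).descFactorial (e i)) hi
      (descFactorial_eq_zero_iff_lt.mpr hlt), mul_zero]
    exact dvd_zero _

theorem Int.prod_factorial_dvd_factorial_mul_vandermonde {k n : ℕ} (L : Fin k → ℕ)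
    (hsum : ∑ i, L i = n + ∑ i : Fin k, (i : ℕ)) :
    ((∏ i, (L i)! : ℕ) : ℤ) ∣ n ! * ∏ i : Fin k, ∏ j ∈ Ioi i, ((L j : ℤ) - L i) := by
  rw [← Matrix.det_of_descFactorial, Matrix.det_apply, mul_sum]
  refine dvd_sum fun σ _ => ?_
  rw [Units.smul_def, smul_eq_mul, mul_left_comm]
  apply Dvd.dvd.mul_left
  have h := prod_factorial_dvd_factorial_mul_prod_descFactorial univ (fun i => L (σ i))
    (fun i => (i : ℕ)) (by rw [Equiv.sum_comp σ L]; exact hsum)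
  rw [Equiv.prod_comp σ (fun i => (L i)!)] at h
  simp only [Matrix.of_apply]
  exact_mod_cast h

namespace YoungDiagram

variable (μ : YoungDiagram)

@[to_additive]
theorem prod_cells {M : Type*} [CommMonoid M] (f : ℕ × ℕ → M) :
    ∏ c ∈ μ.cells, f c = ∏ i ∈ range (μ.colLen 0), ∏ j ∈ range (μ.rowLen i), f (i, j) :=
  prod_finset_product _ _ _ fun ⟨i, j⟩ => by
    simp only [mem_cells, mem_range, ← mem_iff_lt_rowLen, ← mem_iff_lt_colLen]
    exact ⟨fun h => ⟨μ.up_left_mem le_rfl (Nat.zero_le j) h, h⟩, And.right⟩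

theorem card_eq_sum_rowLen : μ.card = ∑ i ∈ range (μ.colLen 0), μ.rowLen i := by
  rw [YoungDiagram.card, card_eq_sum_ones, sum_cells]
  simp

/-- `μ.beta i` is the hook length of `(i, 0)`. In row `i`, the `μ.gamma j` with `j < μ.rowLen i`
and the `μ.beta m` with `i < m < μ.colLen 0` are exactly `0, …, μ.beta i - 1`. -/
def beta (i : ℕ) : ℕ := μ.rowLen i + (μ.colLen 0 - 1 - i)

def gamma (j : ℕ) : ℕ := j + (μ.colLen 0 - μ.colLen j)

variable {μ}

theorem beta_lt_beta {i m : ℕ} (him : i < m) (hm : m < μ.colLen 0) : μ.beta m < μ.beta i := by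
  have := μ.rowLen_anti i m him.le
  unfold beta
  omega

theorem gamma_strictMono : StrictMono μ.gamma := fun j j' h => by
  have := μ.colLen_anti 0 j (Nat.zero_le j)
  have := μ.colLen_anti j j' h.le
  unfold gamma
  omega

theorem gamma_lt_beta {i j : ℕ} (h : (i, j) ∈ μ) : μ.gamma j < μ.beta i := by
  have := μ.colLen_anti 0 j (Nat.zero_le j)
  have := mem_iff_lt_rowLen.mp h
  have := mem_iff_lt_colLen.mp h
  unfold gamma beta
  omega

theorem gamma_ne_beta (j : ℕ) {m : ℕ} (hm : m < μ.colLen 0) : μ.gamma j ≠ μ.beta m := by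
  have := μ.colLen_anti 0 j (Nat.zero_le j)
  unfold gamma beta
  by_cases h : j < μ.rowLen m
  · have := mem_iff_lt_colLen.mp (mem_iff_lt_rowLen.mpr h)
    omega
  · have : ¬m < μ.colLen j := fun h' => h (mem_iff_lt_rowLen.mp (mem_iff_lt_colLen.mpr h'))
    omega

theorem hookLength_eq_beta_sub_gamma {i j : ℕ} (h : (i, j) ∈ μ) :
    μ.hookLength (i, j) = μ.beta i - μ.gamma j := by
  have := μ.colLen_anti 0 j (Nat.zero_le j)
  have := mem_iff_lt_rowLen.mp h
  have := mem_iff_lt_colLen.mp h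
  unfold hookLength beta gamma
  dsimp only
  omega

theorem hookLength_pos {c : ℕ × ℕ} (hc : c ∈ μ) : 0 < μ.hookLength c := by
  have := mem_iff_lt_rowLen.mp hc
  have := mem_iff_lt_colLen.mp hc
  unfold hookLength
  omega

theorem prod_hookLength_row_mul_prod_beta_sub (i : Fin (μ.colLen 0)) :
    (∏ j ∈ range (μ.rowLen i), μ.hookLength (i, j)) * ∏ m ∈ Ioi i, (μ.beta i - μ.beta m) =
      (μ.beta i)! := by
  set G := (range (μ.rowLen i)).image μ.gamma
  set B := (Ioi i).image fun m : Fin (μ.colLen 0) => μ.beta m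
  have hβ_inj : Set.InjOn (fun m : Fin (μ.colLen 0) => μ.beta m) (Ioi i) := fun m _ m' _ h =>
    Fin.val_injective <| by
      by_contra hne
      rcases Nat.lt_or_gt_of_ne hne with hlt | hlt
      · exact (beta_lt_beta hlt m'.isLt).ne' h
      · exact (beta_lt_beta hlt m.isLt).ne h
  have hdisj : Disjoint G B := by
    simp only [G, B, disjoint_left, mem_image]
    rintro _ ⟨j, -, rfl⟩ ⟨m, -, hm⟩
    exact gamma_ne_beta j m.isLt hm.symm
  have hsub : G ∪ B ⊆ range (μ.beta i) := by
    simp only [G, B, union_subset_iff, image_subset_iff, mem_range, mem_Ioi, Fin.lt_def]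
    exact ⟨fun j hj => gamma_lt_beta (mem_iff_lt_rowLen.mpr hj), fun m hm => beta_lt_beta hm m.isLt⟩
  have hunion : G ∪ B = range (μ.beta i) := by
    refine eq_of_subset_of_card_le hsub ?_
    rw [card_union_of_disjoint hdisj, card_image_of_injective _ gamma_strictMono.injective,
      Finset.card_image_of_injOn hβ_inj, Fin.card_Ioi, card_range, card_range]
    unfold beta
    omega
  calc (∏ j ∈ range (μ.rowLen i), μ.hookLength (i, j)) * ∏ m ∈ Ioi i, (μ.beta i - μ.beta m)
      = (∏ x ∈ G, (μ.beta i - x)) * ∏ x ∈ B, (μ.beta i - x) := by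
        rw [prod_image gamma_strictMono.injective.injOn, prod_image hβ_inj]
        congr 1
        exact prod_congr rfl fun j hj =>
          hookLength_eq_beta_sub_gamma (mem_iff_lt_rowLen.mpr (mem_range.mp hj))
    _ = (μ.beta i)! := by
        rw [← prod_union hdisj, hunion, ← descFactorial_eq_prod_range, descFactorial_self]

variable (μ)

theorem prod_hookLength_dvd_factorial_card : ∏ c ∈ μ.cells, μ.hookLength c ∣ μ.card ! := by
  set W := ∏ i : Fin (μ.colLen 0), ∏ m ∈ Ioi i, (μ.beta i - μ.beta m)
  have hW : 0 < W := prod_pos fun i _ => prod_pos fun m hm =>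
    Nat.sub_pos_of_lt (beta_lt_beta (Fin.lt_def.mp (mem_Ioi.mp hm)) m.isLt)
  have hrows : (∏ c ∈ μ.cells, μ.hookLength c) * W = ∏ i : Fin (μ.colLen 0), (μ.beta i)! := by
    rw [prod_cells, ← Fin.prod_univ_eq_prod_range (fun i => ∏ j ∈ range (μ.rowLen i), _),
      ← prod_mul_distrib]
    exact prod_congr rfl fun i _ => prod_hookLength_row_mul_prod_beta_sub i
  have hsum : ∑ i : Fin (μ.colLen 0), μ.beta i = μ.card + ∑ i : Fin (μ.colLen 0), (i : ℕ) := by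
    simp only [beta, sum_add_distrib, card_eq_sum_rowLen, Fin.sum_univ_eq_sum_range (μ.rowLen ·)]
    congr 1
    exact Fintype.sum_equiv Fin.revPerm _ _ fun i => by simp [Fin.val_rev]; omega
  have hV : (∏ i : Fin (μ.colLen 0), ∏ m ∈ Ioi i, ((μ.beta m : ℤ) - μ.beta i)).natAbs = W := by
    rw [← Int.natAbsHom_apply, map_prod]
    refine prod_congr rfl fun i _ => ?_
    rw [map_prod]
    refine prod_congr rfl fun m hm => ?_
    rw [Int.natAbsHom_apply, ← Int.natAbs_neg, neg_sub, Int.natAbs_natCast_sub_natCast_of_ge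
      (beta_lt_beta (Fin.lt_def.mp (mem_Ioi.mp hm)) m.isLt).le]
  have hdvd := Int.natAbs_dvd_natAbs.mpr
    (Int.prod_factorial_dvd_factorial_mul_vandermonde (fun i => μ.beta i) hsum)
  rw [Int.natAbs_mul, hV, Int.natAbs_natCast, Int.natAbs_natCast, ← hrows] at hdvd
  exact Nat.dvd_of_mul_dvd_mul_right hW hdvd

theorem cast_dimIrrep (K : Type*) [Field K] [CharZero K] :
    (μ.dimIrrep : K) = (μ.card ! : K) / ∏ c ∈ μ.cells, (μ.hookLength c : K) := by
  rw [dimIrrep, Nat.cast_div μ.prod_hookLength_dvd_factorial_card, Nat.cast_prod]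
  exact_mod_cast (prod_pos fun c hc => hookLength_pos ((μ.mem_cells c).mp hc)).ne'

variable {μ}

theorem inv_one_add_colLen_sub_one_div {K : Type*} [Field K] [CharZero K] {i : ℕ}
    (hi : i ∈ Icc 1 (μ.rowLen 0)) :
    (1 + ((μ.colLen (μ.rowLen 0 - i) : K) - 1) / i)⁻¹ =
      i / μ.hookLength (0, μ.rowLen 0 - i) := by
  rw [mem_Icc] at hi
  have hc : 0 < μ.colLen (μ.rowLen 0 - i) :=
    mem_iff_lt_colLen.mp (mem_iff_lt_rowLen.mpr (by omega))
  have hhook : (μ.hookLength (0, μ.rowLen 0 - i) : K) = i + (μ.colLen (μ.rowLen 0 - i) - 1) := by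
    rw [hookLength, show μ.rowLen 0 - (μ.rowLen 0 - i) + (μ.colLen (μ.rowLen 0 - i) - 0) - 1 =
      i + (μ.colLen (μ.rowLen 0 - i) - 1) by omega]
    push_cast [Nat.one_le_iff_ne_zero.mpr hc.ne']
    ring
  have hi0 : (i : K) ≠ 0 := by exact_mod_cast (show i ≠ 0 by omega)
  rw [hhook, one_add_div hi0, inv_div]

variable (μ)

theorem prod_inv_one_add_colLen_sub_one_div (K : Type*) [Field K] [CharZero K] :
    ∏ i ∈ Icc 1 (μ.rowLen 0), (1 + ((μ.colLen (μ.rowLen 0 - i) : K) - 1) / i)⁻¹ =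
      (μ.rowLen 0)! / ∏ j ∈ range (μ.rowLen 0), (μ.hookLength (0, j) : K) := by
  rw [prod_congr rfl fun i hi => inv_one_add_colLen_sub_one_div hi, prod_div_distrib,
    ← Nat.cast_prod, ← Ico_add_one_right_eq_Icc, prod_Ico_id_eq_factorial]
  congr 1
  refine prod_nbij' (μ.rowLen 0 - ·) (μ.rowLen 0 - ·) ?_ ?_ ?_ ?_ fun _ _ => rfl <;>
    intro i hi <;> simp only [mem_Ico, mem_range] at hi ⊢ <;> omega

def IsFirstRowDeletion (μ' : YoungDiagram) : Prop :=
  ∀ i j : ℕ, (i + 1, j) ∈ μ ↔ (i, j) ∈ μ'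

namespace IsFirstRowDeletion

variable {μ} {μ' : YoungDiagram}

theorem rowLen_eq (h : μ.IsFirstRowDeletion μ') (i : ℕ) : μ'.rowLen i = μ.rowLen (i + 1) :=
  eq_of_forall_lt_iff fun j => by rw [← mem_iff_lt_rowLen, ← mem_iff_lt_rowLen, h]

theorem colLen_eq (h : μ.IsFirstRowDeletion μ') (j : ℕ) : μ'.colLen j = μ.colLen j - 1 :=
  eq_of_forall_lt_iff fun i => by rw [← mem_iff_lt_colLen, ← h, mem_iff_lt_colLen]; omega

theorem hookLength_eq (h : μ.IsFirstRowDeletion μ') (i j : ℕ) :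
    μ'.hookLength (i, j) = μ.hookLength (i + 1, j) := by
  unfold hookLength
  dsimp only
  rw [h.rowLen_eq, h.colLen_eq]
  omega

@[to_additive]
theorem prod_cells {M : Type*} [CommMonoid M] (h : μ.IsFirstRowDeletion μ') (f : ℕ × ℕ → M) :
    ∏ c ∈ μ.cells, f c =
      (∏ j ∈ range (μ.rowLen 0), f (0, j)) * ∏ c ∈ μ'.cells, f (c.1 + 1, c.2) := by
  rw [μ.prod_cells, μ'.prod_cells, h.colLen_eq]
  rcases Nat.eq_zero_or_pos (μ.colLen 0) with h0 | hpos
  · have : μ.rowLen 0 = 0 := by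
      by_contra hr
      exact (mem_iff_lt_colLen.mp (mem_iff_lt_rowLen.mpr (Nat.pos_of_ne_zero hr))).ne' h0
    simp [h0, this]
  · obtain ⟨k, hk⟩ := Nat.exists_eq_add_of_lt hpos
    simp only [hk, zero_add, Nat.add_sub_cancel, prod_range_succ', h.rowLen_eq, mul_comm]

theorem card_eq (h : μ.IsFirstRowDeletion μ') : μ.card = μ.rowLen 0 + μ'.card := by
  rw [YoungDiagram.card, card_eq_sum_ones, h.sum_cells]
  simp

end IsFirstRowDeletion

end YoungDiagram

/-- Let `μ` be a Young diagram with `n` cells, `d` the length of its first row, and `μ'` the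
diagram obtained from `μ` by deleting its first row.  Then
`dim π_μ = dim π_{μ'} · C(n,d) · ∏_{i=1}^{d} (1 + (c_i - 1)/i)⁻¹`,
where `c_i` is the length of the `(d-i+1)`-th column of `μ` (so `c_i = colLen (d-i)` in
0-indexed terms). -/
theorem stmt1 (μ μ' : YoungDiagram) (n d : ℕ) (hn : μ.card = n) (hd : d = μ.rowLen 0)
    (hdel : ∀ i j : ℕ, (i + 1, j) ∈ μ ↔ (i, j) ∈ μ') :
    (μ.dimIrrep : ℝ) =
      (μ'.dimIrrep : ℝ) * (n.choose d : ℝ) *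
        ∏ i ∈ Finset.Icc 1 d, (1 + ((μ.colLen (d - i) : ℝ) - 1) / (i : ℝ))⁻¹ := by
  subst hn hd
  have hdel : μ.IsFirstRowDeletion μ' := hdel
  have hhooks : ∏ c ∈ μ.cells, (μ.hookLength c : ℝ) =
      (∏ j ∈ range (μ.rowLen 0), (μ.hookLength (0, j) : ℝ)) *
        ∏ c ∈ μ'.cells, (μ'.hookLength c : ℝ) := by
    simp only [hdel.prod_cells, hdel.hookLength_eq]
  have hfac : (μ.card ! : ℝ) = μ.card.choose (μ.rowLen 0) * (μ.rowLen 0)! * μ'.card ! := by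
    have h := choose_mul_factorial_mul_factorial (Nat.le_add_right (μ.rowLen 0) μ'.card)
    rw [Nat.add_sub_cancel_left, ← hdel.card_eq] at h
    exact_mod_cast h.symm
  rw [μ.cast_dimIrrep, μ'.cast_dimIrrep, μ.prod_inv_one_add_colLen_sub_one_div, hhooks, hfac]
  ring
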